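/- arXiv:1004.1216 — 4 statements merged into one kernel-verified Lean document; each statement's English description precedes it below -/
import Mathlib

section
/- For every finite nonempty alphabet Σ and all positive integers m, n, there exists an m-shift de Bruijn sequence of order n over Σ. -/
/-- `w` is an `m`-shift de Bruijn sequence of order `n`: every word of length `n`
appears exactly once in `w` as a factor starting at a position `i*m` (0-indexed). -/
def IsMSdB {α : Type*} (m n : ℕ) (w : List α) : Prop :=
  ∀ u : List α, u.length = n → ∃! i : ℕ, i * m + n ≤ w.length ∧ (w.drop (i * m)).take n = u

/-!
Words of length `n` are the edges of a multidigraph on words of length `n - m`: the edge `e` runs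
from its prefix of length `n - m` to what is left of `e` after deleting its first `m` letters.
Every vertex has as many incoming as outgoing edges (rotation by `m` matches them up), and since
`m ≥ 1` every vertex reaches every other one. By Euler's theorem, proved here by the
longest-trail argument, there is a circuit through all edges. Writing down the first `m` letters
of each edge along the circuit, followed by the final vertex, gives a word whose factor at
position `i * m` is the `i`-th edge.
-/

open Finset

section Euler

variable {V E : Type*} {src dst : E → V}

inductive IsWalk (src dst : E → V) : V → V → List E → Prop
  | nil (v : V) : IsWalk src dst v v []
  | cons {e : E} {v : V} {L : List E} :
      IsWalk src dst (dst e) v L → IsWalk src dst (src e) v (e :: L)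

namespace IsWalk

theorem cons_iff {a b : V} {e : E} {L : List E} :
    IsWalk src dst a b (e :: L) ↔ a = src e ∧ IsWalk src dst (dst e) b L := by
  constructor
  · rintro ⟨⟩; exact ⟨rfl, ‹_›⟩
  · rintro ⟨rfl, h⟩; exact h.cons

theorem append {a b c : V} {L M : List E} (hL : IsWalk src dst a b L)
    (hM : IsWalk src dst b c M) : IsWalk src dst a c (L ++ M) := by
  induction hL with
  | nil => exact hM
  | cons _ ih => exact (ih hM).cons

theorem concat {a b : V} {L : List E} {e : E} (hL : IsWalk src dst a b L) (he : src e = b) :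
    IsWalk src dst a (dst e) (L ++ [e]) :=
  hL.append (he ▸ (nil (dst e)).cons)

theorem of_append {L M : List E} {a c : V} (h : IsWalk src dst a c (L ++ M)) :
    ∃ b, IsWalk src dst a b L ∧ IsWalk src dst b c M := by
  induction L generalizing a with
  | nil => exact ⟨a, nil a, h⟩
  | cons e L ih =>
    rw [List.cons_append, cons_iff] at h
    obtain ⟨rfl, h⟩ := h
    obtain ⟨b, hL, hM⟩ := ih h
    exact ⟨b, hL.cons, hM⟩

variable [DecidableEq V]

theorem countP_dst_add {a b : V} {L : List E} (h : IsWalk src dst a b L) (v : V) :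
    L.countP (dst · = v) + (if a = v then 1 else 0)
      = L.countP (src · = v) + (if b = v then 1 else 0) := by
  induction h with
  | nil => rfl
  | cons _ ih =>
    simp only [List.countP_cons, decide_eq_true_eq]
    split_ifs at ih ⊢ <;> omega

theorem exists_src_eq_dst {a : V} {L : List E} (h : IsWalk src dst a a L) {e : E} (he : e ∈ L) :
    ∃ f ∈ L, src f = dst e := by
  -- a closed walk leaves each vertex as often as it enters it
  have hcount := h.countP_dst_add (dst e)
  have hpos : 0 < L.countP (dst · = dst e) := List.countP_pos_iff.2 ⟨e, he, by simp⟩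
  simpa using List.countP_pos_iff.1 (show 0 < L.countP (src · = dst e) by omega)

theorem exists_notMem_src_eq {a u v : V} {L P : List E} (hL : IsWalk src dst a a L)
    (hP : IsWalk src dst u v P) (hu : ∃ f ∈ L, src f = u) (hv : ∃ g ∉ L, src g = v) :
    ∃ g ∉ L, ∃ f ∈ L, src f = src g := by
  induction hP with
  | nil v =>
    obtain ⟨g, hg, rfl⟩ := hv
    exact ⟨g, hg, hu⟩
  | @cons e _ _ _ ih =>
    by_cases he : e ∈ L
    · exact ih (hL.exists_src_eq_dst he) hv
    · exact ⟨e, he, hu⟩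

theorem exists_notMem_src_eq_of_ne [Fintype E]
    (hbal : ∀ v, #{e | dst e = v} = #{e | src e = v}) {a b : V} {L : List E}
    (h : IsWalk src dst a b L) (hnd : L.Nodup) (hab : a ≠ b) : ∃ e ∉ L, src e = b := by
  classical
  by_contra! hout
  have hcount := h.countP_dst_add b
  rw [if_neg hab, if_pos rfl] at hcount
  have hdst : L.countP (dst · = b) ≤ #{e | dst e = b} := by
    rw [← hnd.card_eq_countP]
    exact card_le_card (filter_subset_filter _ (subset_univ _))
  have hsrc : #{e | src e = b} ≤ L.countP (src · = b) := by
    rw [← hnd.card_eq_countP]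
    refine card_le_card fun e he => ?_
    have he : src e = b := (mem_filter.1 he).2
    exact mem_filter.2 ⟨List.mem_toFinset.2 (by_contra fun h => hout e h he), he⟩
  have := hbal b
  omega

end IsWalk

theorem exists_longest_trail [Fintype E] [Nonempty E] :
    ∃ a b L, IsWalk src dst a b L ∧ L.Nodup ∧
      ∀ a' b' L', IsWalk src dst a' b' L' → L'.Nodup → L'.length ≤ L.length := by
  classical
  let P (k : ℕ) := ∃ a b L, IsWalk src dst a b L ∧ L.Nodup ∧ L.length = k
  have hP0 : P 0 := ⟨_, _, [], .nil (src (Classical.arbitrary E)), List.nodup_nil, rfl⟩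
  obtain ⟨a, b, L, hL, hnd, hlen⟩ := Nat.findGreatest_spec (Nat.zero_le _) hP0
  refine ⟨a, b, L, hL, hnd, fun a' b' L' hL' hnd' => hlen ▸ ?_⟩
  exact Nat.le_findGreatest hnd'.length_le_card ⟨a', b', L', hL', hnd', rfl⟩

theorem exists_eulerian_circuit [DecidableEq V] [Fintype E] [Nonempty E]
    (hbal : ∀ v, #{e | dst e = v} = #{e | src e = v})
    (hconn : ∀ e f : E, ∃ P, IsWalk src dst (src e) (src f) P) :
    ∃ a L, IsWalk src dst a a L ∧ L.Nodup ∧ ∀ e, e ∈ L := by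
  obtain ⟨a, b, L, hL, hnd, hmax⟩ := exists_longest_trail (src := src) (dst := dst)
  have hab : a = b := by
    by_contra hab
    obtain ⟨e, heL, he⟩ := hL.exists_notMem_src_eq_of_ne hbal hnd hab
    have := hmax _ _ _ (hL.concat he) (hnd.append (List.nodup_singleton e) (by simpa using heL))
    simp at this
  subst hab
  refine ⟨a, L, hL, hnd, fun e => by_contra fun he => ?_⟩
  obtain ⟨f, hf⟩ : ∃ f, f ∈ L := by
    have := hmax _ _ _ ((IsWalk.nil (dst e)).cons) (List.nodup_singleton e)
    exact List.exists_mem_of_ne_nil _ (by simpa [Nat.one_le_iff_ne_zero] using this)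
  obtain ⟨P, hP⟩ := hconn f e
  obtain ⟨g, hgL, u, huL, hug⟩ := hL.exists_notMem_src_eq hP ⟨f, hf, rfl⟩ ⟨e, he, rfl⟩
  -- splice `g` into the circuit `L` rotated to start at `src u`
  obtain ⟨L₁, L₂, rfl⟩ := List.append_of_mem huL
  obtain ⟨c, hL₁, hL₂⟩ := hL.of_append
  have hc : c = src g := hug ▸ (IsWalk.cons_iff.1 hL₂).1
  have hwalk := (hL₂.append hL₁).concat (e := g) hc.symm
  have hnd' : (u :: L₂ ++ L₁ ++ [g]).Nodup := by
    refine (List.perm_append_comm.nodup_iff.1 hnd).append (List.nodup_singleton g) ?_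
    exact List.disjoint_singleton.2 fun h => hgL (List.perm_append_comm.mem_iff.1 h)
  have := hmax _ _ _ hwalk hnd'
  simp only [List.length_append, List.length_cons] at this
  omega

end Euler

theorem isMSdB_of_windows {α : Type*} {m n : ℕ} {w : List α} (W : List (List α))
    (hnd : W.Nodup) (hmem : ∀ u : List α, u.length = n → u ∈ W)
    (hlen : w.length < W.length * m + n)
    (hwin : ∀ i (hi : i < W.length), i * m + n ≤ w.length ∧ (w.drop (i * m)).take n = W[i]) :
    IsMSdB m n w := by
  intro u hu
  obtain ⟨i, hi, rfl⟩ := List.getElem_of_mem (hmem u hu)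
  refine ⟨i, hwin i hi, fun j ⟨hj, hju⟩ => ?_⟩
  have hjW : j < W.length := Nat.lt_of_mul_lt_mul_right (a := m) (by omega)
  exact hnd.getElem_inj_iff.1 ((hwin j hjW).2.symm.trans hju)

theorem List.take_length_sub_rotate {α : Type*} (l : List α) (m : ℕ) :
    (l.rotate m).take (l.length - m) = l.drop m := by
  rcases le_or_gt m l.length with h | h
  · rw [List.rotate_eq_drop_append_take h, List.take_left' (by simp)]
  · simp [Nat.sub_eq_zero_of_le h.le, List.drop_eq_nil_of_le h.le]

namespace MShift

variable {α : Type*} {m n : ℕ}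

/-- The de Bruijn-type graph behind `m`-shift sequences: the word `e` of length `n` is an edge
from its first `n - m` letters to the letters after its first `m` ones. For `n ≤ m` both are
`[]`, and the graph is a bouquet of loops. -/
def src (m n : ℕ) (e : List.Vector α n) : List α := e.val.take (n - m)

def dst (m n : ℕ) (e : List.Vector α n) : List α := e.val.drop m

theorem length_src (e : List.Vector α n) : (src m n e).length = n - m := by
  simp [src, e.2]

theorem length_dst (e : List.Vector α n) : (dst m n e).length = n - m := by
  simp [dst, e.2]

theorem card_filter_dst_eq [Fintype α] [DecidableEq α] (v : List α) :
    #{e | dst m n e = v} = #{e | src m n e = v} := by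
  let rot : List.Vector α n → List.Vector α n := fun e => ⟨e.val.rotate m, by simp [e.2]⟩
  have hrot : Function.Bijective rot := Finite.injective_iff_bijective.1
    fun e f h => Subtype.ext (List.rotate_injective m (congrArg Subtype.val h))
  refine card_equiv (Equiv.ofBijective rot hrot) fun e => ?_
  have h := List.take_length_sub_rotate e.val m
  rw [e.2] at h
  simp only [Finset.mem_filter_univ, Equiv.ofBijective_apply]
  simp [src, dst, rot, h]

theorem exists_isWalk_singleton {x z : List α} (hx : x.length = n - m) (hz : z.length = m) :
    ∃ e, IsWalk (src m n) (dst m n) x ((x ++ z).drop m) [e] := by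
  let e : List.Vector α n := ⟨(x ++ z).take n, by simp [hx, hz]; omega⟩
  have hsrc : src m n e = x := by
    simp only [src, e, List.take_take]
    rw [min_eq_left (Nat.sub_le n m), List.take_left' hx]
  have hdst : dst m n e = (x ++ z).drop m := by
    simp only [dst, e, List.drop_take]
    exact List.take_of_length_le (by simp [hx, hz])
  have h := (IsWalk.nil (src := src m n) (dst m n e)).cons (e := e)
  rw [hsrc, hdst] at h
  exact ⟨e, h⟩

theorem exists_isWalk_drop_append {x : List α} (hx : x.length = n - m) (t : ℕ) (z : List α)
    (hz : z.length = t * m) : ∃ P, IsWalk (src m n) (dst m n) x ((x ++ z).drop (t * m)) P := by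
  induction t generalizing x z with
  | zero =>
    rw [Nat.zero_mul, List.length_eq_zero_iff] at hz
    subst hz
    exact ⟨[], by simpa using IsWalk.nil x⟩
  | succ t ih =>
    have hz₁ : (z.take m).length = m := by simp [hz, Nat.succ_mul]
    set x' := (x ++ z.take m).drop m
    obtain ⟨e, he⟩ := exists_isWalk_singleton hx hz₁
    obtain ⟨P, hP⟩ :=
      ih (x := x') (by simp [x', hx, hz₁]) (z.drop m) (by simp [hz, Nat.succ_mul])
    have hsplit : (x ++ z).drop m = x' ++ z.drop m := by
      conv_lhs => rw [← List.take_append_drop m z, ← List.append_assoc]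
      exact List.drop_append_of_le_length (by simp [hz₁])
    have hend : (x' ++ z.drop m).drop (t * m) = (x ++ z).drop ((t + 1) * m) := by
      rw [Nat.succ_mul, Nat.add_comm, ← List.drop_drop, hsplit]
    exact ⟨_, hend ▸ he.append hP⟩

/-- The walk spells out padding followed by the target vertex. -/
theorem exists_isWalk (hm : 1 ≤ m) (c : α) {x y : List α} (hx : x.length = n - m)
    (hy : y.length = n - m) : ∃ P, IsWalk (src m n) (dst m n) x y P := by
  set pad := List.replicate ((n - m) * m - (n - m)) c
  have hpad : (x ++ pad).length = (n - m) * m := by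
    simp [pad, hx, Nat.le_mul_of_pos_right _ hm]
  obtain ⟨P, hP⟩ := exists_isWalk_drop_append hx (n - m) (pad ++ y) (by
    simp [pad, hy, Nat.le_mul_of_pos_right _ hm])
  rw [← List.append_assoc, List.drop_left' hpad] at hP
  exact ⟨P, hP⟩

def block (m : ℕ) (c : α) (e : List.Vector α n) : List α :=
  e.val.take m ++ List.replicate (m - n) c

/-- The sequence spelled by a walk `L` ending at `b`; the letter `c` pads blocks when `n < m`. -/
def word (m : ℕ) (c : α) (L : List (List.Vector α n)) (b : List α) : List α :=
  (L.map (block m c)).flatten ++ b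

variable {c : α} {a b : List α} {L : List (List.Vector α n)}

theorem length_block (e : List.Vector α n) : (block m c e).length = m := by
  simp [block, e.2]
  omega

theorem take_block (e : List.Vector α n) : (block m c e).take n = e.val.take m := by
  rcases le_or_gt n m with h | h
  · simp [block, List.take_of_length_le, e.2, h]
  · simp [block, Nat.sub_eq_zero_of_le h.le, List.take_take, h.le]

theorem length_word : (word m c L b).length = L.length * m + b.length := by
  simp [word, List.length_flatten, Function.comp_def, length_block]

theorem word_cons (e : List.Vector α n) : word m c (e :: L) b = block m c e ++ word m c L b := by
  simp [word]

theorem drop_word {i : ℕ} (hi : i ≤ L.length) :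
    (word m c L b).drop (i * m) = word m c (L.drop i) b := by
  conv_lhs => rw [← List.take_append_drop i L]
  simp only [word, List.map_append, List.flatten_append, List.append_assoc]
  exact List.drop_left' (by simp [List.length_flatten, Function.comp_def, length_block, hi])

theorem take_word_cons {e : List.Vector α n} (h : (word m c L b).take (n - m) = dst m n e) :
    (word m c (e :: L) b).take n = e.val := by
  rw [word_cons, List.take_append, take_block, length_block, h, dst, List.take_append_drop]

theorem take_word (h : IsWalk (src m n) (dst m n) a b L) :
    (word m c L b).take (n - m) = a.take (n - m) := by
  induction h with
  | nil => simp [word]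
  | @cons e _ L _ ih =>
    rw [List.take_of_length_le (length_dst e).le] at ih
    have h := congrArg (List.take (n - m)) (take_word_cons (c := c) ih)
    rw [List.take_take, min_eq_left (Nat.sub_le n m)] at h
    simp [h, src]

theorem take_drop_word (h : IsWalk (src m n) (dst m n) a b L) {i : ℕ} (hi : i < L.length) :
    ((word m c L b).drop (i * m)).take n = L[i].val := by
  rw [← List.take_append_drop i L] at h
  obtain ⟨_, -, hdrop⟩ := h.of_append
  rw [drop_word hi.le, List.drop_eq_getElem_cons hi]
  rw [List.drop_eq_getElem_cons hi, IsWalk.cons_iff] at hdrop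
  exact take_word_cons ((take_word hdrop.2).trans (List.take_of_length_le (length_dst _).le))

end MShift

theorem stmt3 {α : Type*} [Fintype α] [Nonempty α] (m n : ℕ) (hm : 1 ≤ m) (hn : 1 ≤ n) :
    ∃ w : List α, IsMSdB m n w := by
  classical
  obtain ⟨c⟩ := ‹Nonempty α›
  have : Nonempty (List.Vector α n) := ⟨List.Vector.replicate n c⟩
  obtain ⟨a, L, hL, hnd, hall⟩ := exists_eulerian_circuit (src := MShift.src m n)
    (dst := MShift.dst m n) MShift.card_filter_dst_eq
    fun e f => MShift.exists_isWalk hm c (MShift.length_src e) (MShift.length_src f)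
  have ha : a.length = n - m := by
    have hL₀ : L ≠ [] := List.ne_nil_of_mem (hall (Classical.arbitrary _))
    obtain ⟨e, L', rfl⟩ := List.exists_cons_of_ne_nil hL₀
    rw [(IsWalk.cons_iff.1 hL).1, MShift.length_src]
  refine ⟨MShift.word m c L a, isMSdB_of_windows (L.map List.Vector.toList)
    (hnd.map List.Vector.toList_injective)
    (fun u hu => List.mem_map.2 ⟨⟨u, hu⟩, hall _, rfl⟩) ?_ fun i hi => ⟨?_, ?_⟩⟩
  · rw [MShift.length_word, ha, List.length_map]
    omega
  · rw [List.length_map] at hi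
    rw [MShift.length_word, ha]
    have := Nat.mul_le_mul_right m hi
    rw [Nat.succ_mul] at this
    omega
  · rw [List.getElem_map]
    exact MShift.take_drop_word hL _
end

section
/- Let τ be a de Bruijn sequence of order k over the alphabet Γ = Σ^m (each letter of Γ is a word of length m over Σ). Then the word over Σ obtained from τ by replacing each letter of Γ by the corresponding length-m word over Σ is an m-shift de Bruijn sequence of order k·m over Σ. -/
/-- `t` is an (ordinary) de Bruijn sequence of order `k` over the alphabet `β`:
every word of length `k` over `β` appears exactly once in `t` as a factor. -/
def IsDeBruijn {β : Type*} (k : ℕ) (t : List β) : Prop :=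
  ∀ u : List β, u.length = k → ∃! i : ℕ, i + k ≤ t.length ∧ (t.drop i).take k = u

section FlattenBlocks

variable {α : Type*} {m : ℕ}

theorem map_length_map_val (A : List {w : List α // w.length = m}) :
    (A.map Subtype.val).map List.length = List.replicate A.length m := by
  rw [List.map_map, ← List.map_const']
  exact List.map_congr_left fun a _ => a.2

theorem length_flatten_map_val (A : List {w : List α // w.length = m}) :
    (A.map Subtype.val).flatten.length = A.length * m := by
  simp only [List.length_flatten, map_length_map_val, List.sum_replicate, smul_eq_mul]

theorem drop_mul_flatten_map_val (i : ℕ) (A : List {w : List α // w.length = m}) :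
    (A.map Subtype.val).flatten.drop (i * m) = ((A.drop i).map Subtype.val).flatten := by
  induction A generalizing i with
  | nil => simp
  | cons a A ih =>
    cases i with
    | zero => simp
    | succ i =>
      have : (i + 1) * m = a.val.length + i * m := by rw [a.2, Nat.succ_mul, add_comm]
      simp only [List.map_cons, List.flatten_cons, this, List.drop_length_add_append, ih,
        List.drop_succ_cons]

theorem take_mul_flatten_map_val (k : ℕ) (A : List {w : List α // w.length = m}) :
    (A.map Subtype.val).flatten.take (k * m) = ((A.take k).map Subtype.val).flatten := by
  induction A generalizing k with
  | nil => simp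
  | cons a A ih =>
    cases k with
    | zero => simp
    | succ k =>
      have : (k + 1) * m = a.val.length + k * m := by rw [a.2, Nat.succ_mul, add_comm]
      simp only [List.map_cons, List.flatten_cons, this, List.take_length_add_append, ih,
        List.take_succ_cons]

theorem flatten_map_val_injective (hm : 0 < m) :
    Function.Injective fun A : List {w : List α // w.length = m} =>
      (A.map Subtype.val).flatten := by
  intro A B hAB
  have hlen : A.length = B.length := by
    have := congrArg List.length hAB
    simp only [length_flatten_map_val] at this
    exact Nat.eq_of_mul_eq_mul_right hm this
  refine List.map_injective_iff.mpr Subtype.val_injective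
    (List.eq_iff_flatten_eq.mpr ⟨hAB, ?_⟩)
  rw [map_length_map_val, map_length_map_val, hlen]

theorem exists_length_eq_flatten_map_val_eq (k : ℕ) (u : List α) (hu : u.length = k * m) :
    ∃ A : List {w : List α // w.length = m}, A.length = k ∧ (A.map Subtype.val).flatten = u := by
  induction k generalizing u with
  | zero => exact ⟨[], rfl, (List.eq_nil_of_length_eq_zero (by simpa using hu)).symm⟩
  | succ k ih =>
    rw [Nat.succ_mul] at hu
    obtain ⟨A, hA, hAu⟩ := ih (u.drop m) (by rw [List.length_drop]; omega)
    refine ⟨⟨u.take m, by rw [List.length_take]; omega⟩ :: A, by simp [hA], ?_⟩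
    simp only [List.map_cons, List.flatten_cons, hAu, List.take_append_drop]

theorem factor_at_mul_flatten_map_val_iff (hm : 0 < m) (i k : ℕ)
    (A U : List {w : List α // w.length = m}) :
    (i * m + k * m ≤ (A.map Subtype.val).flatten.length ∧
        ((A.map Subtype.val).flatten.drop (i * m)).take (k * m) = (U.map Subtype.val).flatten) ↔
      i + k ≤ A.length ∧ (A.drop i).take k = U := by
  rw [length_flatten_map_val, drop_mul_flatten_map_val, take_mul_flatten_map_val,
    (flatten_map_val_injective hm).eq_iff, ← add_mul, Nat.mul_le_mul_right_iff hm]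

end FlattenBlocks

theorem stmt16_general {α : Type*} (m k : ℕ) (hm : 1 ≤ m)
    (τ : List {w : List α // w.length = m}) (hτ : IsDeBruijn k τ) :
    IsMSdB m (k * m) ((τ.map Subtype.val).flatten) := by
  intro u hu
  obtain ⟨U, hU, rfl⟩ := exists_length_eq_flatten_map_val_eq k u hu
  exact (existsUnique_congr fun i => factor_at_mul_flatten_map_val_iff hm i k τ U).mpr (hτ U hU)

/-- Replacing each letter of a de Bruijn sequence of order `k` over the alphabet
`Σ^m` by the corresponding word of length `m` over `Σ` yields an `m`-shift
de Bruijn sequence of order `k·m` over `Σ`. -/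
theorem stmt16 {α : Type*} (m k : ℕ) (hm : 1 ≤ m) (hk : 1 ≤ k)
    (τ : List {w : List α // w.length = m}) (hτ : IsDeBruijn k τ) :
    IsMSdB m (k * m) ((τ.map Subtype.val).flatten) :=
  stmt16_general m k hm τ hτ
end

section
/- Consider the greedy 'prefer-largest' algorithm for generating an m-shift de Bruijn sequence of order n over Σ (with n > m): start with w = 0^n; repeatedly append to w the lexicographically largest word of length m such that the length-n suffix of the new word has not yet appeared in w as a factor at a modulo-m position; stop when no word can be appended. When the algorithm terminates, the length-(n−m) suffix of w consists entirely of the letter 0. -/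
/-- A block `b` of length `m` may be appended to the current word `w`: the length-`n`
suffix of `w ++ b` does not occur in `w ++ b` as a factor at any earlier modulo-`m`
position. -/
def Allowed {α : Type*} (m n : ℕ) (w b : List α) : Prop :=
  ∀ j : ℕ, j * m + n ≤ w.length + m → j * m ≠ w.length + m - n →
    ((w ++ b).drop (j * m)).take n ≠ (w ++ b).drop (w.length + m - n)

/-- One step of the greedy "prefer-largest" algorithm: append the lexicographically
largest allowed block of length `m`. -/
def GreedyStep {α : Type*} [LinearOrder α] (m n : ℕ) (w w' : List α) : Prop :=
  ∃ b : List α, b.length = m ∧ Allowed m n w b ∧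
    (∀ b' : List α, b'.length = m → Allowed m n w b' → b' ≤ b) ∧ w' = w ++ b

/-- No block of length `m` can be appended any more. -/
def Stuck {α : Type*} (m n : ℕ) (w : List α) : Prop :=
  ¬ ∃ b : List α, b.length = m ∧ Allowed m n w b

/-- Invariant maintained along the greedy run: length is `n + k*m`, the prefix of
length `n` is `z^n`, and length-`n` factors at modulo-`m` positions are distinct. -/
lemma sb_invariant {α : Type*} [LinearOrder α] (m n : ℕ) (hm : 1 ≤ m) (hmn : m < n)
    (z : α) (w : List α)
    (hrun : Relation.ReflTransGen (GreedyStep m n) (List.replicate n z) w) :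
    (∃ k, w.length = n + k * m) ∧ w.take n = List.replicate n z ∧
      ∀ i j : ℕ, i * m + n ≤ w.length → j * m + n ≤ w.length →
        (w.drop (i * m)).take n = (w.drop (j * m)).take n → i = j := by
  induction hrun with
  | refl =>
    refine ⟨⟨0, by simp⟩, by simp, ?_⟩
    intro i j hi hj _
    simp only [List.length_replicate] at hi hj
    have him : i * m = 0 := by omega
    have hjm : j * m = 0 := by omega
    rcases Nat.mul_eq_zero.1 him with h | h
    · rcases Nat.mul_eq_zero.1 hjm with h' | h' <;> omega
    · omega
  | tail hsteps hstep ih =>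
    rename_i v v'
    obtain ⟨b, hblen, hall, _, rfl⟩ := hstep
    obtain ⟨⟨k, hk⟩, htk, hdist⟩ := ih
    have hmulk : (k + 1) * m = k * m + m := by ring
    have hvblen : (v ++ b).length = v.length + m := by
      rw [List.length_append, hblen]
    have hvn : n ≤ v.length := by omega
    refine ⟨⟨k + 1, by omega⟩, ?_, ?_⟩
    · rw [List.take_append_of_le_length hvn, htk]
    · intro i j hi hj heq
      rw [hvblen] at hi hj
      have hcase : ∀ i : ℕ, i * m + n ≤ v.length + m →
          i * m + n ≤ v.length ∨ i * m = v.length + m - n := by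
        intro i hi
        by_cases h : i * m + n ≤ v.length
        · exact Or.inl h
        · right
          have h1 : k * m < i * m := by omega
          have h2 : i * m ≤ (k + 1) * m := by omega
          have h3 : k < i := lt_of_mul_lt_mul_right h1 (Nat.zero_le m)
          have h4 : i ≤ k + 1 := Nat.le_of_mul_le_mul_right h2 hm
          have : i = k + 1 := by omega
          subst this
          omega
      have hfac : ∀ i : ℕ, i * m + n ≤ v.length →
          ((v ++ b).drop (i * m)).take n = (v.drop (i * m)).take n := by
        intro i hi
        rw [List.drop_append_of_le_length (by omega),
          List.take_append_of_le_length (by rw [List.length_drop]; omega)]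
      have hsuf : ((v ++ b).drop (v.length + m - n)).length = n := by
        rw [List.length_drop, hvblen]; omega
      have hfac2 : ∀ i : ℕ, i * m = v.length + m - n →
          ((v ++ b).drop (i * m)).take n = (v ++ b).drop (v.length + m - n) := by
        intro i hi
        rw [hi, List.take_of_length_le (le_of_eq hsuf)]
      rcases hcase i hi with hi' | hi' <;> rcases hcase j hj with hj' | hj'
      · exact hdist i j hi' hj' (by rw [← hfac i hi', ← hfac j hj']; exact heq)
      · exfalso
        rw [hfac2 j hj'] at heq
        exact hall i (by omega) (by omega) heq
      · exfalso
        rw [hfac2 i hi'] at heq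
        exact hall j (by omega) (by omega) heq.symm
      · have : i * m = j * m := by omega
        exact Nat.eq_of_mul_eq_mul_right (by omega) this

/-- When the greedy "prefer-largest" algorithm, started from `0^n`, terminates, the
length-`(n-m)` suffix of the resulting word consists entirely of the letter `0`. -/
theorem stmt18 {α : Type*} [LinearOrder α] (m n : ℕ) (hm : 1 ≤ m) (hmn : m < n)
    (z : α) (hz : ∀ c : α, z ≤ c) (w : List α)
    (hrun : Relation.ReflTransGen (GreedyStep m n) (List.replicate n z) w)
    (hstuck : Stuck m n w) :
    w.drop (w.length - (n - m)) = List.replicate (n - m) z := by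
  classical
  obtain ⟨⟨k, hk⟩, htk, hdist⟩ := sb_invariant m n hm hmn z w hrun
  by_contra hcon
  have hmulk : (k + 1) * m = k * m + m := by ring
  have hLn : n ≤ w.length := by omega
  have hLmn : w.length + m - n = w.length - (n - m) := by omega
  have hposLmn : w.length - (n - m) = (k + 1) * m := by omega
  have hu_len : (w.drop (w.length - (n - m))).length = n - m := by
    rw [List.length_drop]; omega
  -- From stuckness: every length-`m` block `b` satisfies `F j = u ++ b` for some `j ≤ k`.
  have key : ∀ b : List α, b.length = m → ∃ j, j ≤ k ∧
      (w.drop (j * m)).take n = w.drop (w.length - (n - m)) ++ b := by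
    intro b hb
    have hna : ¬ Allowed m n w b := fun hA => hstuck ⟨b, hb, hA⟩
    unfold Allowed at hna
    push_neg at hna
    obtain ⟨j, h1, h2, h3⟩ := hna
    have hj2 : j * m ≤ (k + 1) * m := by omega
    have hj4 : j ≤ k + 1 := Nat.le_of_mul_le_mul_right hj2 hm
    have hjle : j ≤ k := by
      rcases Nat.lt_or_ge j (k + 1) with h | h
      · omega
      · exfalso; apply h2
        have : j = k + 1 := by omega
        subst this; omega
    have hjm : j * m ≤ k * m := Nat.mul_le_mul_right m hjle
    have hjn : j * m + n ≤ w.length := by omega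
    rw [List.drop_append_of_le_length (by omega : j * m ≤ w.length),
      List.take_append_of_le_length (by rw [List.length_drop]; omega),
      List.drop_append_of_le_length (by omega : w.length + m - n ≤ w.length),
      hLmn] at h3
    exact ⟨j, hjle, h3⟩
  set S : Finset ℕ := (Finset.range (k + 1)).filter
    (fun j => ((w.drop (j * m)).take n).take (n - m) = w.drop (w.length - (n - m))) with hS
  set C : Finset (List α) :=
    S.image (fun j => ((w.drop (j * m)).take n).drop (n - m)) with hCdef
  -- every block of length m is in C
  have hC : ∀ b : List α, b.length = m → b ∈ C := by
    intro b hb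
    obtain ⟨j, hjk, hFj⟩ := key b hb
    have hjS : j ∈ S := by
      rw [hS, Finset.mem_filter, Finset.mem_range]
      exact ⟨by omega, by rw [hFj, List.take_left' hu_len]⟩
    exact Finset.mem_image.2 ⟨j, hjS, by rw [hFj, List.drop_left' hu_len]⟩
  set T : Finset ℕ := insert (k + 1) S with hT
  have hTle : ∀ p ∈ T, p ≤ k + 1 := by
    intro p hp
    rcases Finset.mem_insert.1 hp with rfl | h
    · exact le_rfl
    · have := Finset.mem_range.1 (Finset.mem_filter.1 h).1
      omega
  have hatu : ∀ p ∈ T, (w.drop (p * m)).take (n - m) = w.drop (w.length - (n - m)) := by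
    intro p hp
    rcases Finset.mem_insert.1 hp with rfl | hpS
    · rw [← hposLmn]
      exact List.take_of_length_le (le_of_eq hu_len)
    · have h := (Finset.mem_filter.1 hpS).2
      rwa [List.take_take, inf_of_le_left (by omega : n - m ≤ n)] at h
  have h0 : ∀ p ∈ T, 1 ≤ p := by
    intro p hp
    rcases Nat.eq_zero_or_pos p with rfl | h
    · exfalso
      have h1 := hatu 0 hp
      simp only [Nat.zero_mul, List.drop_zero] at h1
      have h2 : w.take (n - m) = List.replicate (n - m) z := by
        have h3 : (w.take n).take (n - m) = w.take (n - m) := by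
          rw [List.take_take, inf_of_le_left (by omega)]
        rw [← h3, htk, List.take_replicate, inf_of_le_left (by omega)]
      exact hcon (by rw [← h1]; exact h2)
    · exact h
  have hpmL : ∀ p ∈ T, p * m ≤ w.length := by
    intro p hp
    have := Nat.mul_le_mul_right m (hTle p hp)
    omega
  -- each factor ending at a position in T decomposes as d ++ u
  have hE : ∀ p ∈ T, (w.drop ((p - 1) * m)).take n
      = (w.drop ((p - 1) * m)).take m ++ w.drop (w.length - (n - m)) := by
    intro p hp
    obtain ⟨q, rfl⟩ : ∃ q, p = q + 1 := ⟨p - 1, by have := h0 p hp; omega⟩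
    simp only [Nat.add_sub_cancel]
    have h1 : (w.drop (q * m)).take m = ((w.drop (q * m)).take n).take m := by
      rw [List.take_take, inf_of_le_left (le_of_lt hmn)]
    have h2 : ((w.drop (q * m)).take n).drop m = w.drop (w.length - (n - m)) := by
      rw [List.drop_take, List.drop_drop]
      have h3 : q * m + m = (q + 1) * m := by ring
      rw [h3]
      exact hatu (q + 1) hp
    calc (w.drop (q * m)).take n
        = ((w.drop (q * m)).take n).take m ++ ((w.drop (q * m)).take n).drop m :=
          (List.take_append_drop m _).symm
      _ = (w.drop (q * m)).take m ++ w.drop (w.length - (n - m)) := by rw [← h1, h2]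
  have hside : ∀ p ∈ T, (p - 1) * m + n ≤ w.length := by
    intro p hp
    have h1 : (p - 1) * m ≤ k * m := Nat.mul_le_mul_right m (by have := hTle p hp; omega)
    omega
  have hgmem : ∀ p ∈ T, (w.drop ((p - 1) * m)).take m ∈ C := by
    intro p hp
    apply hC
    rw [List.length_take, List.length_drop]
    have h1 := hside p hp
    omega
  have hinj : Set.InjOn (fun p => (w.drop ((p - 1) * m)).take m) (T : Set ℕ) := by
    intro p hp q hq hfe
    simp only at hfe
    have heq2 : (w.drop ((p - 1) * m)).take n = (w.drop ((q - 1) * m)).take n := by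
      rw [hE p hp, hE q hq, hfe]
    have := hdist (p - 1) (q - 1) (hside p hp) (hside q hq) heq2
    have := h0 p hp
    have := h0 q hq
    omega
  have hcard1 : T.card ≤ C.card := Finset.card_le_card_of_injOn _ hgmem hinj
  have hcard2 : C.card ≤ S.card := Finset.card_image_le
  have hkS : k + 1 ∉ S := by
    intro h
    have := Finset.mem_range.1 (Finset.mem_filter.1 h).1
    omega
  have hcard3 : T.card = S.card + 1 := Finset.card_insert_of_notMem hkS
  omega
end

section
/- The greedy 'prefer-largest' algorithm (start with 0^n, repeatedly append the lexicographically largest length-m word such that the new length-n suffix has not previously occurred as a factor at a modulo-m position, until stuck) terminates and produces an m-shift de Bruijn sequence of order n over Σ. -/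
/-!
Read each window of `w` (its length-`n` factor at a position `i * m`) as an edge of the de Bruijn
graph on words of length `n - m`, running from its first `n - m` letters to its last `n - m`
letters. Consecutive windows overlap in `n - m` letters, so a run of the algorithm is a walk from
`0^(n-m)` that never repeats an edge; hence it stops, and it stops at a vertex `t` all of whose
out-edges have been used. Comparing in- and out-degrees along the walk forces `t = 0^(n-m)`, after
which every vertex whose out-edges are all used also has all its in-edges used. So if all
out-edges of the vertex `(p ++ 0^m).drop m` are used, the edge `p ++ 0^m` has been used, and since
the algorithm prefers large blocks, every edge `p ++ b` was used before it. Shifting zeros in from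
the right thus shows that every vertex has all its out-edges used, i.e. every word of length `n`
occurs.
-/

open Finset

namespace GreedyDeBruijn

variable {α : Type*} {m n k : ℕ} {w b : List α}

theorem eq_of_take_eq_of_drop_eq {u v : List α} (q : ℕ) (htake : u.take q = v.take q)
    (hdrop : u.drop q = v.drop q) : u = v := by
  rw [← List.take_append_drop q u, htake, hdrop, List.take_append_drop]

theorem replicate_length_le [LinearOrder α] {z : α} (hz : IsBot z) :
    ∀ b : List α, List.replicate b.length z ≤ b
  | [] => le_rfl
  | c :: b => (hz c).lt_or_eq.elim (fun h => le_of_lt (List.Lex.rel h))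
      fun h => h ▸ List.cons_le_cons z (replicate_length_le hz b)

-- Degree balance along a walk whose `i`-th edge runs from `g i` to `f i`.
theorem card_filter_range_add_ite_eq {β : Type*} [DecidableEq β] (f g : ℕ → β) (k : ℕ)
    (hfg : ∀ i < k, f i = g (i + 1)) (y : β) :
    #{i ∈ range (k + 1) | f i = y} + (if g 0 = y then 1 else 0) =
      #{i ∈ range (k + 1) | g i = y} + (if f k = y then 1 else 0) := by
  have hshift : ∑ i ∈ range k, (if f i = y then 1 else 0) =
      ∑ i ∈ range k, (if g (i + 1) = y then 1 else 0) :=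
    sum_congr rfl fun i hi => by rw [hfg i (mem_range.mp hi)]
  rw [card_filter, card_filter, sum_range_succ, sum_range_succ', hshift]
  ring

def window (m n : ℕ) (w : List α) (i : ℕ) : List α := (w.drop (i * m)).take n

theorem length_window {i : ℕ} (h : i * m + n ≤ w.length) : (window m n w i).length = n := by
  simp only [window, List.length_take, List.length_drop]
  omega

theorem window_append {i : ℕ} (h : i * m + n ≤ w.length) :
    window m n (w ++ b) i = window m n w i := by
  rw [window, List.drop_append_of_le_length (by omega),
    List.take_append_of_le_length (by simp only [List.length_drop]; omega), window]

theorem window_zero : window m n w 0 = w.take n := by simp [window]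

theorem drop_window (i : ℕ) :
    (window m n w i).drop m = (window m n w (i + 1)).take (n - m) := by
  rw [window, window, List.drop_take, List.drop_drop, List.take_take, add_one_mul,
    min_eq_left (by omega)]

theorem drop_window_of_length_eq (hmn : m ≤ n) (hk : w.length = n + k * m) :
    (window m n w k).drop m = w.rtake (n - m) := by
  rw [window, List.take_of_length_le (by simp only [List.length_drop]; omega), List.drop_drop,
    List.rtake]
  congr 1
  omega

theorem window_succ_append (hmn : m ≤ n) (hk : w.length = n + k * m) (hb : b.length = m) :
    window m n (w ++ b) (k + 1) = w.rtake (n - m) ++ b := by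
  rw [window, List.take_of_length_le (by simp only [List.length_drop, List.length_append]; grind),
    List.drop_append_of_le_length (by grind), List.rtake]
  congr 2
  grind

theorem length_rtake {q : ℕ} (h : q ≤ w.length) : (w.rtake q).length = q := by
  rw [List.rtake, List.length_drop]
  omega

theorem le_iff_mul_add_le_length (hm : 0 < m) (hk : w.length = n + k * m) {i : ℕ} :
    i ≤ k ↔ i * m + n ≤ w.length := by
  rw [hk, add_comm n, add_le_add_iff_right, Nat.mul_le_mul_right_iff hm]

theorem mul_add_le_length_of_mem_range (hm : 0 < m) (hk : w.length = n + k * m) {i : ℕ}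
    (hi : i ∈ range (k + 1)) : i * m + n ≤ w.length :=
  (le_iff_mul_add_le_length hm hk).mp (mem_range_succ_iff.mp hi)

theorem allowed_iff (hm : 0 < m) (hmn : m < n) (hk : w.length = n + k * m) :
    Allowed m n w b ↔ ∀ j, j * m + n ≤ w.length → window m n w j ≠ w.rtake (n - m) ++ b := by
  have hlast : (w ++ b).drop (w.length + m - n) = w.rtake (n - m) ++ b := by
    rw [List.rtake, List.drop_append_of_le_length (by omega)]
    congr 2
    omega
  have hidx (j : ℕ) :
      (j * m + n ≤ w.length + m ∧ j * m ≠ w.length + m - n) ↔ j * m + n ≤ w.length := by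
    have hsucc : w.length + m = n + (k + 1) * m := by rw [hk]; ring
    rw [hsucc, Nat.add_sub_cancel_left, ← le_iff_mul_add_le_length hm hk, add_comm (j * m),
      add_le_add_iff_left, Nat.mul_le_mul_right_iff hm, Ne, Nat.mul_right_cancel_iff hm]
    omega
  simp only [Allowed, hlast]
  constructor
  · intro h j hj
    rw [← window_append hj]
    exact h j ((hidx j).2 hj).1 ((hidx j).2 hj).2
  · intro h j hj hj'
    have hj'' := (hidx j).1 ⟨hj, hj'⟩
    rw [← window, window_append hj'']
    exact h j hj''

def AllExtensionsOccur (m n : ℕ) (w y : List α) : Prop :=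
  ∀ b : List α, b.length = m → ∃ i, i * m + n ≤ w.length ∧ window m n w i = y ++ b

theorem allExtensionsOccur_rtake_of_stuck (hm : 0 < m) (hmn : m < n)
    (hk : w.length = n + k * m) (hstuck : Stuck m n w) :
    AllExtensionsOccur m n w (w.rtake (n - m)) := by
  intro b hb
  have hforbidden : ¬ ∀ j, j * m + n ≤ w.length → window m n w j ≠ w.rtake (n - m) ++ b :=
    fun h => hstuck ⟨b, hb, (allowed_iff hm hmn hk).mpr h⟩
  push Not at hforbidden
  exact hforbidden

section Invariant

variable [LinearOrder α] {z : α}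

structure GreedyInv (m n : ℕ) (z : α) (w : List α) : Prop where
  exists_length_eq : ∃ k, w.length = n + k * m
  take_eq_replicate : w.take n = List.replicate n z
  window_inj : ∀ i j, i * m + n ≤ w.length → j * m + n ≤ w.length →
    window m n w i = window m n w j → i = j
  -- Each appended block was the largest allowed one: a larger block would have recreated an
  -- earlier window.
  exists_window_eq_of_lt : ∀ i, 0 < i → i * m + n ≤ w.length → ∀ b : List α, b.length = m →
    (window m n w i).drop (n - m) < b →
    ∃ j < i, j * m + n ≤ w.length ∧ window m n w j = (window m n w i).take (n - m) ++ b

theorem greedyInv_replicate (hm : 0 < m) (z : α) : GreedyInv m n z (List.replicate n z) := by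
  have h0 (i : ℕ) (hi : i * m + n ≤ (List.replicate n z).length) : i = 0 :=
    Nat.le_zero.mp ((le_iff_mul_add_le_length hm (by simp)).mpr hi)
  exact ⟨⟨0, by simp⟩, by simp, fun i j hi hj _ => by rw [h0 i hi, h0 j hj],
    fun i hi hi' => absurd (h0 i hi') hi.ne'⟩

theorem GreedyInv.greedyStep (hm : 0 < m) (hmn : m < n) {w' : List α}
    (hg : GreedyInv m n z w) (hs : GreedyStep m n w w') : GreedyInv m n z w' := by
  obtain ⟨b, hb, hallowed, hmax, rfl⟩ := hs
  obtain ⟨k, hk⟩ := hg.exists_length_eq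
  have hk' : (w ++ b).length = n + (k + 1) * m := by simp only [List.length_append, hb, hk]; ring
  have hnew := window_succ_append hmn.le hk hb
  have hidx (i : ℕ) (hi : i * m + n ≤ (w ++ b).length) : i * m + n ≤ w.length ∨ i = k + 1 := by
    rwa [← le_iff_mul_add_le_length hm hk', Nat.le_succ_iff, le_iff_mul_add_le_length hm hk]
      at hi
  have hfresh := (allowed_iff hm hmn hk).mp hallowed
  refine ⟨⟨k + 1, hk'⟩, by rw [List.take_append_of_le_length (by omega), hg.take_eq_replicate],
    ?_, ?_⟩
  · intro i j hi hj heq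
    rcases hidx i hi with hi | rfl <;> rcases hidx j hj with hj | rfl
    · rw [window_append hi, window_append hj] at heq
      exact hg.window_inj i j hi hj heq
    · rw [window_append hi, hnew] at heq
      exact absurd heq (hfresh i hi)
    · rw [window_append hj, hnew] at heq
      exact absurd heq.symm (hfresh j hj)
    · rfl
  · intro i hi0 hi b' hb' hlt
    rcases hidx i hi with hi | rfl
    · rw [window_append hi] at hlt ⊢
      obtain ⟨j, hji, hj, heq⟩ := hg.exists_window_eq_of_lt i hi0 hi b' hb' hlt
      exact ⟨j, hji, by simp only [List.length_append]; omega, by rw [window_append hj, heq]⟩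
    · have htlen : (w.rtake (n - m)).length = n - m := length_rtake (by omega)
      rw [hnew, List.drop_left' htlen] at hlt
      rw [hnew, List.take_left' htlen]
      have hforbidden : ¬ Allowed m n w b' := fun h => (hmax b' hb' h).not_gt hlt
      rw [allowed_iff hm hmn hk] at hforbidden
      push Not at hforbidden
      obtain ⟨j, hj, heq⟩ := hforbidden
      exact ⟨j, Nat.lt_succ_of_le ((le_iff_mul_add_le_length hm hk).mpr hj),
        by simp only [List.length_append]; omega, by rw [window_append hj, heq]⟩

theorem GreedyInv.of_reflTransGen (hm : 0 < m) (hmn : m < n)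
    (h : Relation.ReflTransGen (GreedyStep m n) (List.replicate n z) w) : GreedyInv m n z w := by
  induction h with
  | refl => exact greedyInv_replicate hm z
  | tail _ hs ih => exact ih.greedyStep hm hmn hs

theorem GreedyInv.window_injOn (hm : 0 < m) (hg : GreedyInv m n z w)
    (hk : w.length = n + k * m) : Set.InjOn (window m n w) (range (k + 1)) := fun i hi j hj =>
  hg.window_inj i j (mul_add_le_length_of_mem_range hm hk hi)
    (mul_add_le_length_of_mem_range hm hk hj)

theorem take_window_zero (hg : GreedyInv m n z w) :
    (window m n w 0).take (n - m) = List.replicate (n - m) z := by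
  rw [window_zero, hg.take_eq_replicate, List.take_replicate, min_eq_left (Nat.sub_le n m)]

end Invariant

section Termination

variable [Finite α]

variable (α) in
noncomputable def words (k : ℕ) : Finset (List α) := (List.finite_length_eq α k).toFinset

theorem mem_words {l : List α} : l ∈ words α k ↔ l.length = k := Set.Finite.mem_toFinset _

variable [LinearOrder α] {z : α}

theorem GreedyInv.length_lt (hm : 0 < m) (hg : GreedyInv m n z w) :
    w.length < n + #(words α n) * m := by
  obtain ⟨k, hk⟩ := hg.exists_length_eq
  have hcard : #(range (k + 1)) ≤ #(words α n) :=
    card_le_card_of_injOn (window m n w)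
      (fun i hi => mem_words.mpr (length_window (mul_add_le_length_of_mem_range hm hk hi)))
      (hg.window_injOn hm hk)
  rw [card_range] at hcard
  rw [hk]
  nlinarith

theorem exists_greedyStep_of_not_stuck (h : ¬ Stuck m n w) : ∃ w', GreedyStep m n w w' := by
  obtain ⟨b, ⟨hb, hallowed⟩, hmax⟩ :=
    Set.exists_max_image {b | b.length = m ∧ Allowed m n w b} id
      ((List.finite_length_eq α m).subset fun _ => And.left)
      (by simpa [Stuck, Set.Nonempty] using h)
  exact ⟨_, b, hb, hallowed, fun b' hb' h => hmax b' ⟨hb', h⟩, rfl⟩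

theorem exists_reflTransGen_stuck (hm : 0 < m) (hmn : m < n) {w : List α}
    (hg : GreedyInv m n z w) :
    ∃ w', Relation.ReflTransGen (GreedyStep m n) w w' ∧ Stuck m n w' := by
  by_cases hstuck : Stuck m n w
  · exact ⟨w, .refl, hstuck⟩
  obtain ⟨w', hs⟩ := exists_greedyStep_of_not_stuck hstuck
  have hg' := hg.greedyStep hm hmn hs
  have hlen : w'.length = w.length + m := by
    obtain ⟨b, hb, -, -, rfl⟩ := hs
    rw [List.length_append, hb]
  have hbound := hg'.length_lt hm
  obtain ⟨w'', h, hstuck''⟩ := exists_reflTransGen_stuck hm hmn hg'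
  exact ⟨w'', .head hs h, hstuck''⟩
termination_by n + #(words α n) * m - w.length
decreasing_by omega

end Termination

section Counting

variable [LinearOrder α] {z : α}

def indicesEndingWith (m n k : ℕ) (w y : List α) : Finset ℕ :=
  {i ∈ range (k + 1) | (window m n w i).drop m = y}

def indicesStartingWith (m n k : ℕ) (w y : List α) : Finset ℕ :=
  {i ∈ range (k + 1) | (window m n w i).take (n - m) = y}

theorem card_indicesEndingWith_add_ite_eq (y : List α) :
    #(indicesEndingWith m n k w y) + (if (window m n w 0).take (n - m) = y then 1 else 0) =
      #(indicesStartingWith m n k w y) + (if (window m n w k).drop m = y then 1 else 0) :=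
  card_filter_range_add_ite_eq (fun i => (window m n w i).drop m)
    (fun i => (window m n w i).take (n - m)) k (fun i _ => drop_window i) y

theorem injOn_take_window (hm : 0 < m) (hg : GreedyInv m n z w) (hk : w.length = n + k * m)
    (y : List α) :
    Set.InjOn (fun i => (window m n w i).take m) (indicesEndingWith m n k w y) :=
  fun _ hi _ hj h => hg.window_injOn hm hk (mem_filter.mp hi).1 (mem_filter.mp hj).1 <|
    eq_of_take_eq_of_drop_eq m h ((mem_filter.mp hi).2.trans (mem_filter.mp hj).2.symm)

variable [Finite α]

theorem mapsTo_take_window (hm : 0 < m) (hmn : m < n) (hk : w.length = n + k * m)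
    (y : List α) :
    Set.MapsTo (fun i => (window m n w i).take m) (indicesEndingWith m n k w y) (words α m) :=
  fun i hi => by
    rw [mem_coe, mem_words, List.length_take,
      length_window (mul_add_le_length_of_mem_range hm hk (mem_filter.mp hi).1)]
    omega

theorem card_words_le_card_indicesStartingWith (hm : 0 < m) (hk : w.length = n + k * m)
    {y : List α} (hy : y.length = n - m) (hy' : AllExtensionsOccur m n w y) :
    #(words α m) ≤ #(indicesStartingWith m n k w y) := by
  refine card_le_card_of_surjOn (fun i => (window m n w i).drop (n - m)) fun b hb => ?_
  obtain ⟨i, hi, heq⟩ := hy' b (mem_words.mp hb)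
  refine ⟨i, mem_filter.mpr ⟨?_, ?_⟩, ?_⟩
  · exact mem_range_succ_iff.mpr ((le_iff_mul_add_le_length hm hk).mpr hi)
  · rw [heq, List.take_left' hy]
  · simp only [heq, List.drop_left' hy]

theorem rtake_eq_replicate_of_stuck (hm : 0 < m) (hmn : m < n) (hg : GreedyInv m n z w)
    (hk : w.length = n + k * m) (hstuck : Stuck m n w) :
    w.rtake (n - m) = List.replicate (n - m) z := by
  by_contra hne
  have hbal := card_indicesEndingWith_add_ite_eq (m := m) (n := n) (k := k) (w := w)
    (w.rtake (n - m))
  rw [take_window_zero hg, drop_window_of_length_eq hmn.le hk, if_pos rfl,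
    if_neg (Ne.symm hne)] at hbal
  have hle := card_le_card_of_injOn _ (mapsTo_take_window hm hmn hk (w.rtake (n - m)))
    (injOn_take_window hm hg hk _)
  have hge := card_words_le_card_indicesStartingWith hm hk (length_rtake (by omega))
    (allExtensionsOccur_rtake_of_stuck hm hmn hk hstuck)
  omega

theorem exists_window_eq_append_of_allExtensionsOccur (hm : 0 < m) (hmn : m < n)
    (hg : GreedyInv m n z w) (hk : w.length = n + k * m)
    (hT : w.rtake (n - m) = List.replicate (n - m) z)
    {y : List α} (hy : y.length = n - m) (hy' : AllExtensionsOccur m n w y)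
    {d : List α} (hd : d.length = m) :
    ∃ i, i * m + n ≤ w.length ∧ window m n w i = d ++ y := by
  have hbal := card_indicesEndingWith_add_ite_eq (m := m) (n := n) (k := k) (w := w) y
  rw [take_window_zero hg, drop_window_of_length_eq hmn.le hk, hT] at hbal
  obtain ⟨i, hi, hid⟩ := surjOn_of_injOn_of_card_le _ (mapsTo_take_window hm hmn hk y)
    (injOn_take_window hm hg hk y)
    ((card_words_le_card_indicesStartingWith hm hk hy hy').trans (Nat.add_right_cancel hbal).ge)
    (mem_words.mpr hd)
  refine ⟨i, mul_add_le_length_of_mem_range hm hk (mem_filter.mp hi).1, ?_⟩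
  rw [← List.take_append_drop m (window m n w i), (mem_filter.mp hi).2]
  exact congrArg (· ++ y) hid

theorem allExtensionsOccur_of_drop (hm : 0 < m) (hmn : m < n) (hz : IsBot z)
    (hg : GreedyInv m n z w) (hk : w.length = n + k * m)
    (hT : w.rtake (n - m) = List.replicate (n - m) z)
    (h0 : AllExtensionsOccur m n w (List.replicate (n - m) z))
    {p : List α} (hp : p.length = n - m)
    (hp' : AllExtensionsOccur m n w ((p ++ List.replicate m z).drop m)) :
    AllExtensionsOccur m n w p := by
  by_cases hpz : p = List.replicate (n - m) z
  · exact hpz ▸ h0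
  obtain ⟨i, hi, hwin⟩ := exists_window_eq_append_of_allExtensionsOccur hm hmn hg hk hT
    (by simp only [List.length_drop, List.length_append, List.length_replicate]; omega) hp'
    (d := (p ++ List.replicate m z).take m) (by simp only [List.length_take,
      List.length_append, List.length_replicate]; omega)
  rw [List.take_append_drop] at hwin
  have hi0 : i ≠ 0 := by
    rintro rfl
    rw [← take_window_zero hg, hwin, List.take_left' hp] at hpz
    exact hpz rfl
  intro b hb
  rcases (hb ▸ replicate_length_le hz b).eq_or_lt with hbz | hbz
  · exact ⟨i, hi, by rw [hwin, hbz]⟩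
  · obtain ⟨j, -, hj, heq⟩ := hg.exists_window_eq_of_lt i (Nat.pos_of_ne_zero hi0) hi b hb
      (by rwa [hwin, List.drop_left' hp])
    exact ⟨j, hj, by rw [heq, hwin, List.take_left' hp]⟩

theorem allExtensionsOccur_append_replicate (hm : 0 < m) (hmn : m < n) (hz : IsBot z)
    (hg : GreedyInv m n z w) (hk : w.length = n + k * m)
    (hT : w.rtake (n - m) = List.replicate (n - m) z)
    (h0 : AllExtensionsOccur m n w (List.replicate (n - m) z))
    (q : List α) (hq : q.length ≤ n - m) :
    AllExtensionsOccur m n w (q ++ List.replicate (n - m - q.length) z) := by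
  rcases eq_or_ne q [] with rfl | hq0
  · simpa using h0
  have hshift : (q ++ List.replicate (n - m - q.length) z ++ List.replicate m z).drop m =
      q.drop m ++ List.replicate (n - m - (q.drop m).length) z := by
    rw [List.append_assoc, List.replicate_append_replicate, List.drop_append, List.drop_replicate,
      List.length_drop]
    congr 2
    omega
  have hlt : (q.drop m).length < q.length := by
    rw [List.length_drop]
    have := List.length_pos_iff.mpr hq0
    omega
  refine allExtensionsOccur_of_drop hm hmn hz hg hk hT h0
    (by simp only [List.length_append, List.length_replicate]; omega) ?_
  rw [hshift]
  exact allExtensionsOccur_append_replicate hm hmn hz hg hk hT h0 (q.drop m) (by omega)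
termination_by q.length

theorem isMSdB_of_stuck (hm : 0 < m) (hmn : m < n) (hz : IsBot z) (hg : GreedyInv m n z w)
    (hstuck : Stuck m n w) : IsMSdB m n w := by
  obtain ⟨k, hk⟩ := hg.exists_length_eq
  have hT := rtake_eq_replicate_of_stuck hm hmn hg hk hstuck
  have h0 : AllExtensionsOccur m n w (List.replicate (n - m) z) :=
    hT ▸ allExtensionsOccur_rtake_of_stuck hm hmn hk hstuck
  intro u hu
  have hall := allExtensionsOccur_append_replicate hm hmn hz hg hk hT h0 (u.take (n - m))
    (by simp)
  rw [List.length_take, hu, min_eq_left (Nat.sub_le n m), Nat.sub_self, List.replicate_zero,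
    List.append_nil] at hall
  obtain ⟨i, hi, hwin⟩ := hall (u.drop (n - m)) (by rw [List.length_drop, hu]; omega)
  rw [List.take_append_drop] at hwin
  exact ⟨i, ⟨hi, hwin⟩, fun j ⟨hj, hju⟩ => hg.window_inj j i hj hi (hju.trans hwin.symm)⟩

end Counting

end GreedyDeBruijn

/-- The greedy "prefer-largest" algorithm, started from `0^n`, terminates, and any
word it produces at termination is an `m`-shift de Bruijn sequence of order `n`. -/
theorem stmt19 {α : Type*} [Fintype α] [LinearOrder α] (m n : ℕ) (hm : 1 ≤ m) (hmn : m < n)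
    (z : α) (hz : ∀ c : α, z ≤ c) :
    (∃ w : List α,
        Relation.ReflTransGen (GreedyStep m n) (List.replicate n z) w ∧ Stuck m n w) ∧
    (∀ w : List α,
        Relation.ReflTransGen (GreedyStep m n) (List.replicate n z) w → Stuck m n w →
          IsMSdB m n w) :=
  ⟨GreedyDeBruijn.exists_reflTransGen_stuck hm hmn (GreedyDeBruijn.greedyInv_replicate hm z),
    fun _ hw hstuck => GreedyDeBruijn.isMSdB_of_stuck hm hmn hz
      (GreedyDeBruijn.GreedyInv.of_reflTransGen hm hmn hw) hstuck⟩
end
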